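/- Let γ : ℝ → ℂ be a continuously differentiable L-periodic curve with γ′(t) ≠ 0 for all t, let n(t) = i γ′(t)/|γ′(t)|, let μ : ℝ → ℝ be a continuous L-periodic real density, and define the double layer potential D μ(z) = (1/(2π)) ∫_0^L [directional derivative at γ(t), in direction n(t), of y ↦ log ‖y − z‖] · μ(t) |γ′(t)| dt for z ∈ U = ℂ \ γ(ℝ). Then D μ is differentiable on U and its gradient satisfies, in complex form, (∂_{x₁} D μ)(z) − i (∂_{x₂} D μ)(z) = −(1/(2πi)) ∫_0^L μ(t) γ′(t)/(γ(t) − z)² dt for every z = x₁ + i x₂ ∈ U. -/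

import Mathlib

open MeasureTheory Real

lemma fderiv_log_norm_apply (z w v : ℂ) (h : w ≠ z) :
    fderiv ℝ (fun y : ℂ => Real.log ‖y - z‖) w v = (v / (w - z)).re := by
  have hwz : w - z ≠ 0 := sub_ne_zero.2 h
  have hn : ‖w - z‖ ≠ 0 := norm_ne_zero_iff.2 hwz
  have h1 : HasFDerivAt (fun y : ℂ => ‖y - z‖ ^ 2) (2 • (innerSL ℝ (w - z))) w := by
    simpa using ((hasFDerivAt_id w).sub_const z).norm_sq
  have h2 : HasFDerivAt (fun y : ℂ => Real.log (‖y - z‖ ^ 2))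
      ((‖w - z‖ ^ 2)⁻¹ • (2 • (innerSL ℝ (w - z)))) w :=
    h1.log (pow_ne_zero 2 hn)
  have h3 : HasFDerivAt (fun y : ℂ => Real.log ‖y - z‖)
      ((1/2 : ℝ) • ((‖w - z‖ ^ 2)⁻¹ • (2 • (innerSL ℝ (w - z))))) w := by
    have h4 := h2.const_mul (1/2 : ℝ)
    have : (fun y : ℂ => (1/2 : ℝ) * Real.log (‖y - z‖ ^ 2))
        = fun y : ℂ => Real.log ‖y - z‖ := by
      funext y
      rw [Real.log_pow]
      push_cast
      ring
    rwa [this] at h4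
  rw [h3.fderiv]
  simp only [ContinuousLinearMap.coe_smul', Pi.smul_apply, smul_eq_mul,
    innerSL_apply_apply, Complex.inner, ContinuousLinearMap.smul_apply]
  rw [Complex.div_re, Complex.sq_norm]
  have h0 : Complex.normSq (w - z) ≠ 0 := (Complex.normSq_pos.2 hwz).ne'
  simp only [Complex.mul_re, Complex.conj_re, Complex.conj_im]
  field_simp
  ring

lemma integrand_eq (γ : ℝ → ℂ) (μ : ℝ → ℝ) (z : ℂ) (t : ℝ)
    (h : γ t ≠ z) (h' : deriv γ t ≠ 0) :
    (fderiv ℝ (fun y : ℂ => Real.log ‖y - z‖) (γ t))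
        (Complex.I * deriv γ t / (‖deriv γ t‖ : ℂ)) * μ t * ‖deriv γ t‖
      = μ t * (Complex.I * deriv γ t / (γ t - z)).re := by
  rw [fderiv_log_norm_apply z (γ t) _ h]
  have hr : (‖deriv γ t‖ : ℝ) ≠ 0 := norm_ne_zero_iff.2 h'
  rw [div_right_comm, Complex.div_ofReal_re]
  have habs : ‖deriv γ t‖ ≠ 0 := by simpa using hr
  field_simp

noncomputable def DL' (γ : ℝ → ℂ) (μ : ℝ → ℝ) (z : ℂ) (t : ℝ) : ℂ →L[ℝ] ℝ :=
  μ t • (Complex.reCLM.comp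
    ((Complex.I * deriv γ t / (γ t - z) ^ 2) • ((1 : ℂ →L[ℂ] ℂ).restrictScalars ℝ)))

lemma DL'_apply (γ : ℝ → ℂ) (μ : ℝ → ℝ) (z : ℂ) (t : ℝ) (v : ℂ) :
    DL' γ μ z t v = μ t * ((Complex.I * deriv γ t / (γ t - z) ^ 2) * v).re := by
  simp [DL', smul_eq_mul]

lemma hasFDerivAt_DL (γ : ℝ → ℂ) (μ : ℝ → ℝ) (t : ℝ) (z : ℂ) (h : γ t ≠ z) :
    HasFDerivAt (fun x : ℂ => μ t * (Complex.I * deriv γ t / (γ t - x)).re)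
      (DL' γ μ z t) z := by
  have h0 : γ t - z ≠ 0 := sub_ne_zero.2 h
  have h1 : HasDerivAt (fun x : ℂ => γ t - x) (-1) z := by
    simpa using (hasDerivAt_id z).const_sub (γ t)
  have h2 : HasDerivAt (fun x : ℂ => (γ t - x)⁻¹) (((γ t - z) ^ 2)⁻¹) z := by
    simpa [Function.comp_def] using (hasDerivAt_inv h0).comp z h1
  have h3 : HasDerivAt (fun x : ℂ => Complex.I * deriv γ t / (γ t - x))
      (Complex.I * deriv γ t / (γ t - z) ^ 2) z := by
    simpa [div_eq_mul_inv] using h2.const_mul (Complex.I * deriv γ t)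
  have h4 : HasFDerivAt (fun x : ℂ => Complex.I * deriv γ t / (γ t - x))
      ((Complex.I * deriv γ t / (γ t - z) ^ 2) • ((1 : ℂ →L[ℂ] ℂ).restrictScalars ℝ)) z := by
    have h4' := (h3.hasFDerivAt).restrictScalars ℝ
    have heq : ((Complex.I * deriv γ t / (γ t - z) ^ 2) • ((1 : ℂ →L[ℂ] ℂ).restrictScalars ℝ))
        = (ContinuousLinearMap.smulRight (1 : ℂ →L[ℂ] ℂ)
            (Complex.I * deriv γ t / (γ t - z) ^ 2)).restrictScalars ℝ := by
      ext v
      simp [mul_comm]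
    rw [heq]
    exact h4'
  have h5 := ((μ t • Complex.reCLM).hasFDerivAt
      (x := Complex.I * deriv γ t / (γ t - z))).comp z h4
  have e : DL' γ μ z t = (μ t • Complex.reCLM).comp ((Complex.I * deriv γ t / (γ t - z) ^ 2) • ((1 : ℂ →L[ℂ] ℂ).restrictScalars ℝ)) := by
    ext v; simp [DL']
  rw [e]
  exact h5

lemma continuous_DL (γ : ℝ → ℂ) (hγ : ContDiff ℝ 1 γ) (μ : ℝ → ℝ) (hμ : Continuous μ)
    (z : ℂ) (hz : ∀ t, γ t - z ≠ 0) : Continuous (fun t => DL' γ μ z t) := by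
  have hγ'c : Continuous (deriv γ) := hγ.continuous_deriv le_rfl
  have hc : Continuous (fun t => Complex.I * deriv γ t / (γ t - z) ^ 2) :=
    (continuous_const.mul hγ'c).div ((hγ.continuous.sub continuous_const).pow 2)
      (fun t => pow_ne_zero 2 (hz t))
  exact hμ.smul ((hc.smul continuous_const).const_clm_comp Complex.reCLM)

/-- for a `C¹`, `L`-periodic closed curve `γ` with nonvanishing
derivative, unit normal `n(t) = i γ'(t)/|γ'(t)|`, and a continuous `L`-periodic
real density `μ`, the double layer potential
`D μ(z) = (1/(2π)) ∫₀ᴸ ∂_{n(t)}[log ‖· - z‖](γ(t)) μ(t) |γ'(t)| dt` is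
differentiable on `U = ℂ \ γ(ℝ)` and its gradient satisfies, in complex form,
`∂_{x₁} Dμ(z) - i ∂_{x₂} Dμ(z) = -(1/(2πi)) ∫₀ᴸ μ(t) γ'(t)/(γ(t) - z)² dt`. -/
theorem double_layer_gradient_cauchy_form
    (L : ℝ) (hL : 0 < L) (γ : ℝ → ℂ) (hγ : ContDiff ℝ 1 γ)
    (hper : Function.Periodic γ L) (hγ' : ∀ t, deriv γ t ≠ 0)
    (μ : ℝ → ℝ) (hμ : Continuous μ) (hμper : Function.Periodic μ L) :
    DifferentiableOn ℝ
      (fun z => (1 / (2 * π)) * ∫ t in (0:ℝ)..L,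
        (fderiv ℝ (fun y : ℂ => Real.log ‖y - z‖) (γ t))
            (Complex.I * deriv γ t / (‖deriv γ t‖ : ℂ)) * μ t * ‖deriv γ t‖)
      (Set.range γ)ᶜ ∧
    ∀ z ∈ (Set.range γ)ᶜ,
      ((fderiv ℝ
          (fun z => (1 / (2 * π)) * ∫ t in (0:ℝ)..L,
            (fderiv ℝ (fun y : ℂ => Real.log ‖y - z‖) (γ t))
                (Complex.I * deriv γ t / (‖deriv γ t‖ : ℂ)) * μ t * ‖deriv γ t‖)
          z 1 : ℝ) : ℂ) -
        Complex.I *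
          ((fderiv ℝ
            (fun z => (1 / (2 * π)) * ∫ t in (0:ℝ)..L,
              (fderiv ℝ (fun y : ℂ => Real.log ‖y - z‖) (γ t))
                  (Complex.I * deriv γ t / (‖deriv γ t‖ : ℂ)) * μ t * ‖deriv γ t‖)
            z Complex.I : ℝ) : ℂ) =
        -(1 / (2 * π * Complex.I)) *
          ∫ t in (0:ℝ)..L, (μ t : ℂ) * deriv γ t / (γ t - z) ^ 2 := by
  have hγc : Continuous γ := hγ.continuous
  have hγ'c : Continuous (deriv γ) := hγ.continuous_deriv le_rfl
  have hcomp : IsCompact (Set.range γ) := by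
    rw [← hper.image_uIcc hL.ne' 0]
    exact isCompact_uIcc.image hγc
  have hUopen : IsOpen (Set.range γ)ᶜ := hcomp.isClosed.isOpen_compl
  -- the simplified function
  set g : ℂ → ℝ := fun z => ∫ t in (0:ℝ)..L, μ t * (Complex.I * deriv γ t / (γ t - z)).re
    with hg
  -- key derivative statement
  have key : ∀ z₀ ∈ (Set.range γ)ᶜ,
      HasFDerivAt g (∫ t in (0:ℝ)..L, DL' γ μ z₀ t) z₀ := by
    intro z₀ hz₀
    obtain ⟨ε, hε, hball⟩ := Metric.isOpen_iff.1 hUopen z₀ hz₀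
    have hdist : ∀ x ∈ Metric.ball z₀ (ε/2), ∀ t : ℝ, ε/2 ≤ ‖γ t - x‖ := by
      intro x hx t
      by_contra hlt
      push_neg at hlt
      have hmem : γ t ∈ Metric.ball z₀ ε := by
        have h1 : dist (γ t) x < ε/2 := by simpa [dist_eq_norm] using hlt
        have h2 : dist x z₀ < ε/2 := by simpa [Metric.mem_ball] using hx
        have := dist_triangle (γ t) x z₀
        simp only [Metric.mem_ball]
        linarith
      exact (hball hmem) (Set.mem_range_self t)
    have hne : ∀ x ∈ Metric.ball z₀ (ε/2), ∀ t : ℝ, γ t - x ≠ 0 := by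
      intro x hx t h0
      have := hdist x hx t
      rw [h0, norm_zero] at this
      linarith
    have hz₀ball : z₀ ∈ Metric.ball z₀ (ε/2) := Metric.mem_ball_self (half_pos hε)
    have := intervalIntegral.hasFDerivAt_integral_of_dominated_of_fderiv_le
      (𝕜 := ℝ) (μ := volume) (F := fun z t => μ t * (Complex.I * deriv γ t / (γ t - z)).re)
      (F' := fun z t => DL' γ μ z t) (x₀ := z₀)
      (bound := fun t => |μ t| * ‖deriv γ t‖ / (ε/2)^2) (a := 0) (b := L)
      (Metric.ball_mem_nhds z₀ (half_pos hε)) ?hF_meas ?hF_int ?hF'_meas ?h_bound ?bound_int ?h_diff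
    · exact this
    case hF_meas =>
      filter_upwards [Metric.ball_mem_nhds z₀ (half_pos hε)] with x hx
      exact ((hμ.mul (Complex.continuous_re.comp
        ((continuous_const.mul hγ'c).div (hγc.sub continuous_const)
          (fun t => hne x hx t)))).aestronglyMeasurable)
    case hF_int =>
      exact ((hμ.mul (Complex.continuous_re.comp
        ((continuous_const.mul hγ'c).div (hγc.sub continuous_const)
          (fun t => hne z₀ hz₀ball t)))).intervalIntegrable 0 L)
    case hF'_meas =>
      exact (continuous_DL γ hγ μ hμ z₀ (hne z₀ hz₀ball)).aestronglyMeasurable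
    case h_bound =>
      apply MeasureTheory.ae_of_all
      intro t _ x hx
      apply ContinuousLinearMap.opNorm_le_bound _ (by positivity)
      intro v
      rw [DL'_apply]
      have h1 : ε/2 ≤ ‖γ t - x‖ := hdist x hx t
      have h2 : ‖(Complex.I * deriv γ t / (γ t - x) ^ 2 * v).re‖
          ≤ ‖deriv γ t‖ / ‖γ t - x‖^2 * ‖v‖ := by
        calc ‖(Complex.I * deriv γ t / (γ t - x) ^ 2 * v).re‖
            ≤ ‖Complex.I * deriv γ t / (γ t - x) ^ 2 * v‖ := Complex.abs_re_le_norm _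
          _ = ‖deriv γ t‖ / ‖γ t - x‖^2 * ‖v‖ := by
              simp [norm_mul, norm_div, norm_pow]
      calc ‖μ t * (Complex.I * deriv γ t / (γ t - x) ^ 2 * v).re‖
          = |μ t| * ‖(Complex.I * deriv γ t / (γ t - x) ^ 2 * v).re‖ := by
            rw [norm_mul]; rfl
        _ ≤ |μ t| * (‖deriv γ t‖ / ‖γ t - x‖^2 * ‖v‖) := by
            exact mul_le_mul_of_nonneg_left h2 (abs_nonneg _)
        _ ≤ |μ t| * (‖deriv γ t‖ / (ε/2)^2 * ‖v‖) := by
            gcongr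
        _ = |μ t| * ‖deriv γ t‖ / (ε/2)^2 * ‖v‖ := by ring
    case bound_int =>
      exact (((hμ.abs.mul hγ'c.norm).div_const _).intervalIntegrable 0 L)
    case h_diff =>
      apply MeasureTheory.ae_of_all
      intro t _ x hx
      exact hasFDerivAt_DL γ μ t x (fun hh => hne x hx t (by rw [hh, sub_self]))
  -- eventual equality of the original function with (1/(2π)) * g
  have heq : ∀ z₀ ∈ (Set.range γ)ᶜ,
      (fun z => (1 / (2 * π)) * ∫ t in (0:ℝ)..L,
        (fderiv ℝ (fun y : ℂ => Real.log ‖y - z‖) (γ t))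
            (Complex.I * deriv γ t / (‖deriv γ t‖ : ℂ)) * μ t * ‖deriv γ t‖)
      =ᶠ[nhds z₀] (fun z => (1 / (2 * π)) * g z) := by
    intro z₀ hz₀
    filter_upwards [hUopen.mem_nhds hz₀] with z hz
    congr 1
    apply intervalIntegral.integral_congr
    intro t _
    exact integrand_eq γ μ z t (fun hh => hz ⟨t, hh⟩) (hγ' t)
  have hdz : ∀ z₀ ∈ (Set.range γ)ᶜ,
      HasFDerivAt (fun z => (1 / (2 * π)) * g z)
        ((1 / (2 * π)) • ∫ t in (0:ℝ)..L, DL' γ μ z₀ t) z₀ := by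
    intro z₀ hz₀
    exact (key z₀ hz₀).const_mul _
  constructor
  · intro z₀ hz₀
    exact (((hdz z₀ hz₀).differentiableAt).congr_of_eventuallyEq
      (heq z₀ hz₀)).differentiableWithinAt
  · intro z hz
    have hfd : fderiv ℝ (fun z => (1 / (2 * π)) * ∫ t in (0:ℝ)..L,
        (fderiv ℝ (fun y : ℂ => Real.log ‖y - z‖) (γ t))
            (Complex.I * deriv γ t / (‖deriv γ t‖ : ℂ)) * μ t * ‖deriv γ t‖) z
        = (1 / (2 * π)) • ∫ t in (0:ℝ)..L, DL' γ μ z t := by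
      rw [(heq z hz).fderiv_eq]
      exact (hdz z hz).fderiv
    have hne' : ∀ t : ℝ, γ t - z ≠ 0 := by
      intro t h0
      exact hz ⟨t, by rw [sub_eq_zero] at h0; exact h0⟩
    have hDLcont := continuous_DL γ hγ μ hμ z hne'
    have hDLint : MeasureTheory.IntegrableOn (fun t => DL' γ μ z t) (Set.Ioc 0 L) volume :=
      hDLcont.integrableOn_Ioc
    have happly : ∀ v : ℂ, (∫ t in (0:ℝ)..L, DL' γ μ z t) v
        = ∫ t in (0:ℝ)..L, DL' γ μ z t v := by
      intro v
      rw [intervalIntegral.integral_of_le hL.le, intervalIntegral.integral_of_le hL.le]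
      exact ContinuousLinearMap.integral_apply hDLint v
    set J : ℂ := ∫ t in (0:ℝ)..L, (μ t : ℂ) * deriv γ t / (γ t - z) ^ 2 with hJ
    have hcJ : Continuous (fun t => (μ t : ℂ) * deriv γ t / (γ t - z) ^ 2) :=
      ((Complex.continuous_ofReal.comp hμ).mul hγ'c).div
        ((hγc.sub continuous_const).pow 2) (fun t => pow_ne_zero 2 (hne' t))
    have hJint : MeasureTheory.IntegrableOn
        (fun t => (μ t : ℂ) * deriv γ t / (γ t - z) ^ 2) (Set.Ioc 0 L) volume :=
      hcJ.integrableOn_Ioc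
    have hre : ∀ f : ℝ → ℂ, MeasureTheory.IntegrableOn f (Set.Ioc 0 L) volume →
        (∫ t in (0:ℝ)..L, f t).re = ∫ t in (0:ℝ)..L, (f t).re := by
      intro f hf
      rw [intervalIntegral.integral_of_le hL.le, intervalIntegral.integral_of_le hL.le]
      exact (ContinuousLinearMap.integral_comp_comm Complex.reCLM hf).symm
    have hval1 : (∫ t in (0:ℝ)..L, DL' γ μ z t) 1 = (Complex.I * J).re := by
      rw [happly]
      have : ∀ t : ℝ, DL' γ μ z t 1
          = (Complex.I * ((μ t : ℂ) * deriv γ t / (γ t - z) ^ 2)).re := by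
        intro t
        rw [DL'_apply, mul_one]
        have h8 : Complex.I * ((μ t : ℂ) * deriv γ t / (γ t - z) ^ 2)
            = (μ t : ℂ) * (Complex.I * deriv γ t / (γ t - z) ^ 2) := by ring
        rw [h8, Complex.re_ofReal_mul]
      rw [intervalIntegral.integral_congr (fun t _ => this t)]
      have h9 : (∫ t in (0:ℝ)..L, Complex.I * ((μ t : ℂ) * deriv γ t / (γ t - z) ^ 2)).re
          = ∫ t in (0:ℝ)..L, (Complex.I * ((μ t : ℂ) * deriv γ t / (γ t - z) ^ 2)).re :=
        hre _ (hJint.const_mul Complex.I)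
      rw [← h9, intervalIntegral.integral_const_mul, ← hJ]
    have hval2 : (∫ t in (0:ℝ)..L, DL' γ μ z t) Complex.I = -(J.re) := by
      rw [happly]
      have : ∀ t : ℝ, DL' γ μ z t Complex.I
          = (-((μ t : ℂ) * deriv γ t / (γ t - z) ^ 2)).re := by
        intro t
        rw [DL'_apply]
        have h6 : Complex.I * deriv γ t / (γ t - z) ^ 2 * Complex.I
            = -(deriv γ t / (γ t - z) ^ 2) := by
          have h0 := pow_ne_zero 2 (hne' t)
          field_simp
          linear_combination (deriv γ t / (γ t - z) ^ 2) * Complex.I_mul_I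
        have h7 : (μ t : ℂ) * deriv γ t / (γ t - z) ^ 2
            = (μ t : ℂ) * (deriv γ t / (γ t - z) ^ 2) := by ring
        rw [h6, h7, Complex.neg_re, Complex.neg_re, Complex.re_ofReal_mul]
        ring
      rw [intervalIntegral.integral_congr (fun t _ => this t)]
      simp only [Complex.neg_re]
      rw [intervalIntegral.integral_neg]
      have h9 : (∫ t in (0:ℝ)..L, (μ t : ℂ) * deriv γ t / (γ t - z) ^ 2).re
          = ∫ t in (0:ℝ)..L, ((μ t : ℂ) * deriv γ t / (γ t - z) ^ 2).re := hre _ hJint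
      rw [← h9, ← hJ]
    rw [hfd]
    simp only [ContinuousLinearMap.coe_smul', Pi.smul_apply, smul_eq_mul]
    rw [hval1, hval2]
    have hImul : (Complex.I * J).re = -J.im := by simp [Complex.mul_re]
    rw [hImul]
    have hπ : (π : ℂ) ≠ 0 := Complex.ofReal_ne_zero.2 Real.pi_ne_zero
    have hrest : J = (J.re : ℂ) + (J.im : ℂ) * Complex.I := (Complex.re_add_im J).symm
    have hc : -(1 / (2 * (π:ℂ) * Complex.I)) = Complex.I / (2 * (π:ℂ)) := by
      have h2πI : (2 * (π:ℂ) * Complex.I) ≠ 0 := by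
        simp [hπ, Complex.I_ne_zero]
      have h2π : (2 * (π:ℂ)) ≠ 0 := by simp [hπ]
      field_simp
      first
      | linear_combination (2 * (π:ℂ)) * Complex.I_mul_I
      | linear_combination (-(2 * (π:ℂ))) * Complex.I_mul_I
      | linear_combination Complex.I_mul_I
      | linear_combination (-1 : ℂ) * Complex.I_mul_I
    rw [hc]
    conv_rhs => rw [hrest]
    push_cast
    linear_combination (-(J.im:ℂ) / (2 * (π:ℂ))) * Complex.I_mul_I
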